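/- Let n be even, n ≥ 6. In the wreath graph C_n[2K_1], the two 'alternating' n-cycles ((0,0),(1,1),(2,0),(3,1),…,(n−1,1)) and ((0,1),(1,0),(2,1),(3,0),…,(n−1,0)), together with the two 'pure' n-cycles ((0,0),(1,0),…,(n−1,0)) and ((0,1),(1,1),…,(n−1,1)), form a set of four n-cycles that is invariant under the group generated by the rotation ρ, the reflection μ, and the odd-index swap product t_1 = ∏_{i odd} σ_i. -/

import Mathlib

def wreath (n : ℕ) : SimpleGraph (ZMod n × Fin 2) where
  Adj u v := u ≠ v ∧ (v.1 = u.1 + 1 ∨ u.1 = v.1 + 1)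
  symm := ⟨by rintro u v ⟨h1, h2⟩; exact ⟨h1.symm, h2.symm⟩⟩
  loopless := ⟨by rintro u ⟨h, _⟩; exact h rfl⟩

def wRho (n : ℕ) : Equiv.Perm (ZMod n × Fin 2) :=
  Equiv.prodCongr (Equiv.addRight 1) (Equiv.refl _)

def wMu (n : ℕ) : Equiv.Perm (ZMod n × Fin 2) :=
  Equiv.prodCongr (Equiv.neg (ZMod n)) (Equiv.refl _)

def t1fun (n : ℕ) : ZMod n × Fin 2 → ZMod n × Fin 2 :=
  fun p => if p.1.val % 2 = 1 then (p.1, 1 - p.2) else p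

lemma t1fun_involutive (n : ℕ) : Function.Involutive (t1fun n) := by
  intro p
  unfold t1fun
  by_cases h : p.1.val % 2 = 1 <;> simp [h]

def t1perm (n : ℕ) : Equiv.Perm (ZMod n × Fin 2) :=
  (t1fun_involutive n).toPerm

lemma myval_add_one (n : ℕ) (hn : 6 ≤ n) (h2 : 2 ∣ n) (a : ZMod n) :
    (a + 1).val % 2 = (a.val + 1) % 2 := by
  have : NeZero n := ⟨by omega⟩
  rw [ZMod.val_add, Nat.mod_mod_of_dvd _ h2, ZMod.val_one_eq_one_mod,
    Nat.mod_eq_of_lt (show 1 < n by omega)]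

lemma myval_neg (n : ℕ) (hn : 6 ≤ n) (h2 : 2 ∣ n) (a : ZMod n) :
    (-a).val % 2 = a.val % 2 := by
  have : NeZero n := ⟨by omega⟩
  rw [ZMod.neg_val]
  have hlt := a.val_lt
  split
  · simp_all
  · omega

lemma myval_sub_one (n : ℕ) (hn : 6 ≤ n) (h2 : 2 ∣ n) (a : ZMod n) :
    (a - 1).val % 2 = (a.val + 1) % 2 := by
  have h := myval_add_one n hn h2 (a - 1)
  rw [sub_add_cancel] at h
  omega

lemma image_perm_eq {α : Type*} (e : Equiv.Perm α) (C D : Set α)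
    (h : ∀ q, q ∈ D ↔ e.symm q ∈ C) : ⇑e '' C = D := by
  rw [Equiv.image_eq_preimage_symm]; ext q; exact (h q).symm

theorem stmt_15 (n : ℕ) (hn : 6 ≤ n) (heven : 2 ∣ n) :
    ∀ g ∈ Subgroup.closure {wRho n, wMu n, t1perm n},
      ∀ C ∈ ({ {p : ZMod n × Fin 2 | (p.2 : ℕ) = p.1.val % 2},
               {p : ZMod n × Fin 2 | (p.2 : ℕ) = (p.1.val + 1) % 2},
               {p : ZMod n × Fin 2 | p.2 = 0},
               {p : ZMod n × Fin 2 | p.2 = 1} } : Set (Set (ZMod n × Fin 2))),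
        (fun p => g p) '' C ∈
          ({ {p : ZMod n × Fin 2 | (p.2 : ℕ) = p.1.val % 2},
             {p : ZMod n × Fin 2 | (p.2 : ℕ) = (p.1.val + 1) % 2},
             {p : ZMod n × Fin 2 | p.2 = 0},
             {p : ZMod n × Fin 2 | p.2 = 1} } : Set (Set (ZMod n × Fin 2))) := by
  have : NeZero n := ⟨by omega⟩
  set A : Set (ZMod n × Fin 2) := {p | (p.2 : ℕ) = p.1.val % 2} with hA
  set B : Set (ZMod n × Fin 2) := {p | (p.2 : ℕ) = (p.1.val + 1) % 2} with hB
  set Cz : Set (ZMod n × Fin 2) := {p | p.2 = 0} with hCz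
  set Co : Set (ZMod n × Fin 2) := {p | p.2 = 1} with hCo
  set S : Set (Set (ZMod n × Fin 2)) := {A, B, Cz, Co} with hS
  -- transition facts
  have hρsymm : ∀ q : ZMod n × Fin 2, (wRho n).symm q = (q.1 - 1, q.2) := by
    intro q; simp [wRho, Equiv.prodCongr, sub_eq_add_neg, Prod.map]
  have hμsymm : ∀ q : ZMod n × Fin 2, (wMu n).symm q = (-q.1, q.2) := by
    intro q; simp [wMu, Equiv.prodCongr, Prod.map]
  -- membership preservation for ρ
  have hρ : ∀ C ∈ S, ⇑(wRho n) '' C ∈ S := by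
    rintro C (rfl | rfl | rfl | rfl)
    · have : ⇑(wRho n) '' A = B := by
        refine image_perm_eq _ _ _ fun q => ?_
        rw [hρsymm q]
        simp only [hA, hB, Set.mem_setOf_eq]
        have h := myval_sub_one n hn heven q.1
        omega
      rw [this]; simp [hS]
    · have : ⇑(wRho n) '' B = A := by
        refine image_perm_eq _ _ _ fun q => ?_
        rw [hρsymm q]
        simp only [hA, hB, Set.mem_setOf_eq]
        have h := myval_sub_one n hn heven q.1
        omega
      rw [this]; simp [hS]
    · have : ⇑(wRho n) '' Cz = Cz := by
        refine image_perm_eq _ _ _ fun q => ?_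
        rw [hρsymm q]
        exact Iff.rfl
      rw [this]; simp [hS]
    · have : ⇑(wRho n) '' Co = Co := by
        refine image_perm_eq _ _ _ fun q => ?_
        rw [hρsymm q]
        exact Iff.rfl
      rw [this]; simp [hS]
  have hρinv : ∀ C ∈ S, ⇑(wRho n)⁻¹ '' C ∈ S := by
    have hsymm : ∀ q : ZMod n × Fin 2, ((wRho n)⁻¹).symm q = (q.1 + 1, q.2) := fun q => rfl
    rintro C (rfl | rfl | rfl | rfl)
    · have : ⇑(wRho n)⁻¹ '' A = B := by
        refine image_perm_eq _ _ _ fun q => ?_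
        rw [hsymm q]
        simp only [hA, hB, Set.mem_setOf_eq]
        have h := myval_add_one n hn heven q.1
        omega
      rw [this]; simp [hS]
    · have : ⇑(wRho n)⁻¹ '' B = A := by
        refine image_perm_eq _ _ _ fun q => ?_
        rw [hsymm q]
        simp only [hA, hB, Set.mem_setOf_eq]
        have h := myval_add_one n hn heven q.1
        omega
      rw [this]; simp [hS]
    · have : ⇑(wRho n)⁻¹ '' Cz = Cz := by
        refine image_perm_eq _ _ _ fun q => ?_
        rw [hsymm q]
        exact Iff.rfl
      rw [this]; simp [hS]
    · have : ⇑(wRho n)⁻¹ '' Co = Co := by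
        refine image_perm_eq _ _ _ fun q => ?_
        rw [hsymm q]
        exact Iff.rfl
      rw [this]; simp [hS]
  have hμ : ∀ C ∈ S, ⇑(wMu n) '' C ∈ S := by
    rintro C (rfl | rfl | rfl | rfl)
    · have : ⇑(wMu n) '' A = A := by
        refine image_perm_eq _ _ _ fun q => ?_
        rw [hμsymm q]
        simp only [hA, Set.mem_setOf_eq]
        have h := myval_neg n hn heven q.1
        omega
      rw [this]; simp [hS]
    · have : ⇑(wMu n) '' B = B := by
        refine image_perm_eq _ _ _ fun q => ?_
        rw [hμsymm q]
        simp only [hB, Set.mem_setOf_eq]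
        have h := myval_neg n hn heven q.1
        omega
      rw [this]; simp [hS]
    · have : ⇑(wMu n) '' Cz = Cz := by
        refine image_perm_eq _ _ _ fun q => ?_
        rw [hμsymm q]
        exact Iff.rfl
      rw [this]; simp [hS]
    · have : ⇑(wMu n) '' Co = Co := by
        refine image_perm_eq _ _ _ fun q => ?_
        rw [hμsymm q]
        exact Iff.rfl
      rw [this]; simp [hS]
  have ht1A : ⇑(t1perm n) '' A = Cz := by
    refine image_perm_eq _ _ _ fun q => ?_
    obtain ⟨i, s⟩ := q
    show s = 0 ↔ t1fun n (i, s) ∈ A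
    simp only [hA, t1fun, Set.mem_setOf_eq]
    by_cases hp : i.val % 2 = 1 <;> fin_cases s <;> simp [hp] <;> omega
  have ht1Cz : ⇑(t1perm n) '' Cz = A := by
    refine image_perm_eq _ _ _ fun q => ?_
    obtain ⟨i, s⟩ := q
    show (i, s) ∈ A ↔ (t1fun n (i, s)).2 = 0
    simp only [hA, t1fun, Set.mem_setOf_eq]
    by_cases hp : i.val % 2 = 1 <;> fin_cases s <;> simp [hp] <;> omega
  have ht1B : ⇑(t1perm n) '' B = Co := by
    refine image_perm_eq _ _ _ fun q => ?_
    obtain ⟨i, s⟩ := q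
    show s = 1 ↔ t1fun n (i, s) ∈ B
    simp only [hB, t1fun, Set.mem_setOf_eq]
    have := i.val_lt
    by_cases hp : i.val % 2 = 1 <;> fin_cases s <;> simp [hp] <;> omega
  have ht1Co : ⇑(t1perm n) '' Co = B := by
    refine image_perm_eq _ _ _ fun q => ?_
    obtain ⟨i, s⟩ := q
    show (i, s) ∈ B ↔ (t1fun n (i, s)).2 = 1
    simp only [hB, t1fun, Set.mem_setOf_eq]
    have := i.val_lt
    by_cases hp : i.val % 2 = 1 <;> fin_cases s <;> simp [hp] <;> omega
  have ht1 : ∀ C ∈ S, ⇑(t1perm n) '' C ∈ S := by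
    rintro C (rfl | rfl | rfl | rfl)
    · rw [ht1A]; simp [hS]
    · rw [ht1B]; simp [hS]
    · rw [ht1Cz]; simp [hS]
    · rw [ht1Co]; simp [hS]
  -- the induction
  intro g hg
  have key : (∀ C ∈ S, ⇑g '' C ∈ S) ∧ (∀ C ∈ S, ⇑g⁻¹ '' C ∈ S) := by
    refine Subgroup.closure_induction (fun x hx => ?_) ?_
      (fun x y _ _ ihx ihy => ?_) (fun x _ ihx => ?_) hg
    · rcases hx with rfl | rfl | rfl
      · exact ⟨hρ, hρinv⟩
      · exact ⟨hμ, by rw [show (wMu n)⁻¹ = wMu n from rfl]; exact hμ⟩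
      · exact ⟨ht1, by rw [show (t1perm n)⁻¹ = t1perm n from rfl]; exact ht1⟩
    · constructor <;> intro C hC <;> simpa using hC
    · constructor
      · intro C hC
        have : ⇑(x * y) '' C = ⇑x '' (⇑y '' C) := by
          rw [← Set.image_comp]; rfl
        rw [this]
        exact ihx.1 _ (ihy.1 _ hC)
      · intro C hC
        have : ⇑(x * y)⁻¹ '' C = ⇑y⁻¹ '' (⇑x⁻¹ '' C) := by
          rw [← Set.image_comp, mul_inv_rev]; rfl
        rw [this]
        exact ihy.2 _ (ihx.2 _ hC)
    · exact ⟨ihx.2, by rw [inv_inv]; exact ihx.1⟩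
  exact fun C hC => key.1 C hC
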